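/- arXiv:1905.03056 — 4 statements merged into one kernel-verified Lean document; each statement's English description precedes it below -/
import Mathlib

section
/- Let p and q be distinct primes such that (q+1) divides (p−1). Then positive integers a, b satisfy 1/a + 1/b = (q+1)/(pq) if and only if one of the following holds: (a, b) = (p, pq); (a, b) = (pq, p); or there exists a positive integer ζ with ζ ≡ 1 (mod q+1) and ζ dividing q², such that either a = (ζp² + pq)/(q+1) and b = (ζpq + q²)/(ζ(q+1)), or a = (ζpq + q²)/(ζ(q+1)) and b = (ζp² + pq)/(q+1). -/
theorem stmt_0 (p q : ℕ) (hp : p.Prime) (hq : q.Prime) (hpq : p ≠ q)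
    (hdvd : (q + 1) ∣ (p - 1)) (a b : ℕ) (ha : 0 < a) (hb : 0 < b) :
    (1 / (a : ℚ) + 1 / (b : ℚ) = ((q : ℚ) + 1) / ((p : ℚ) * q)) ↔
      ((a = p ∧ b = p * q) ∨ (a = p * q ∧ b = p) ∨
        ∃ ζ : ℕ, 0 < ζ ∧ ζ ≡ 1 [MOD q + 1] ∧ ζ ∣ q ^ 2 ∧
          (((a : ℚ) = ((ζ : ℚ) * p ^ 2 + p * q) / ((q : ℚ) + 1) ∧
              (b : ℚ) = ((ζ : ℚ) * p * q + q ^ 2) / ((ζ : ℚ) * ((q : ℚ) + 1))) ∨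
            ((a : ℚ) = ((ζ : ℚ) * p * q + q ^ 2) / ((ζ : ℚ) * ((q : ℚ) + 1)) ∧
              (b : ℚ) = ((ζ : ℚ) * p ^ 2 + p * q) / ((q : ℚ) + 1)))) := by
  have hp0 : (0:ℚ) < p := by exact_mod_cast hp.pos
  have hq0 : (0:ℚ) < q := by exact_mod_cast hq.pos
  have hqQ : ((q:ℚ) + 1) ≠ 0 := by positivity
  constructor
  · intro h
    -- turn into a natural-number equation
    have h1 : (b + a) * (p * q) = (q + 1) * (a * b) := by
      have ha0 : (a:ℚ) ≠ 0 := Nat.cast_ne_zero.mpr ha.ne'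
      have hb0 : (b:ℚ) ≠ 0 := Nat.cast_ne_zero.mpr hb.ne'
      field_simp at h
      exact_mod_cast (by linear_combination h : ((b:ℚ) + a) * (p * q) = (q + 1) * (a * b))
    clear h
    have hp2 : 2 ≤ p := hp.two_le
    have hq2 : 2 ≤ q := hq.two_le
    -- the inequalities
    have hlt1 : p * q < (q + 1) * a := by
      by_contra hc
      push_neg at hc
      have h2 : (q + 1) * a * b ≤ p * q * b := Nat.mul_le_mul_right b hc
      have h3 : 0 < p * q * a := Nat.mul_pos (Nat.mul_pos hp.pos hq.pos) ha
      nlinarith [h1, h2, h3]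
    have hlt2 : p * q < (q + 1) * b := by
      by_contra hc
      push_neg at hc
      have h2 : (q + 1) * b * a ≤ p * q * a := Nat.mul_le_mul_right a hc
      have h3 : 0 < p * q * b := Nat.mul_pos (Nat.mul_pos hp.pos hq.pos) hb
      nlinarith [h1, h2, h3]
    obtain ⟨D, hDa⟩ : ∃ D, (q + 1) * a = p * q + D :=
      ⟨(q + 1) * a - p * q, (Nat.add_sub_cancel' hlt1.le).symm⟩
    obtain ⟨E, hEb⟩ : ∃ E, (q + 1) * b = p * q + E :=
      ⟨(q + 1) * b - p * q, (Nat.add_sub_cancel' hlt2.le).symm⟩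
    have hDE : D * E = p ^ 2 * q ^ 2 := by
      have key : (D:ℤ) * E = (p:ℤ)^2 * q^2 := by
        have h1' : ((b:ℤ) + a) * (p * q) = ((q:ℤ) + 1) * (a * b) := by exact_mod_cast h1
        have hDa' : ((q:ℤ) + 1) * a = (p:ℤ) * q + D := by exact_mod_cast hDa
        have hEb' : ((q:ℤ) + 1) * b = (p:ℤ) * q + E := by exact_mod_cast hEb
        linear_combination (-(E:ℤ)) * hDa' + (-(((q:ℤ)+1)*a) + (p:ℤ)*q) * hEb' + (-((q:ℤ)+1)) * h1'
      exact_mod_cast key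
    -- split D into prime powers
    obtain ⟨d1, d2, hd1, hd2, rfl⟩ :
        ∃ d1 d2, d1 ∣ p ^ 2 ∧ d2 ∣ q ^ 2 ∧ D = d1 * d2 :=
      exists_dvd_and_dvd_of_dvd_mul ⟨E, hDE.symm⟩
    obtain ⟨i, hi, rfl⟩ := (Nat.dvd_prime_pow hp).mp hd1
    obtain ⟨j, hj, rfl⟩ := (Nat.dvd_prime_pow hq).mp hd2
    -- modular facts
    have hpm1 : ((q:ℤ)+1) ∣ (p:ℤ) - 1 := by
      zify [hp.one_le] at hdvd
      exact hdvd
    have hpq1 : ((q:ℤ)+1) ∣ (p:ℤ)*q + 1 := by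
      have h2 : ((q:ℤ)+1) ∣ (p:ℤ)*((q:ℤ)+1) := dvd_mul_left _ _
      have h3 : (p:ℤ)*q + 1 = (p:ℤ)*((q:ℤ)+1) - ((p:ℤ) - 1) := by ring
      rw [h3]
      exact dvd_sub h2 hpm1
    have hDa' : ((q:ℤ) + 1) * a = (p:ℤ) * q + (p:ℤ)^i * (q:ℤ)^j := by exact_mod_cast hDa
    have hmodD : ((q:ℤ)+1) ∣ (p:ℤ)^i * (q:ℤ)^j - 1 := by
      have h3 : (p:ℤ)^i * (q:ℤ)^j - 1 = ((q:ℤ)+1)*a - ((p:ℤ)*q + 1) := by linarith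
      rw [h3]
      exact dvd_sub (dvd_mul_right _ _) hpq1
    have hpim1 : ((q:ℤ)+1) ∣ (p:ℤ)^i - 1 := by
      have := (sub_dvd_pow_sub_pow (p:ℤ) 1 i)
      simp at this
      exact hpm1.trans this
    have hqsq : q ^ 2 ≡ 1 [MOD q + 1] := by
      obtain ⟨m, rfl⟩ := Nat.exists_eq_add_of_le hq.one_le
      exact (Nat.ModEq.symm ((Nat.modEq_iff_dvd' (Nat.one_le_pow _ _ (by omega))).mpr
        ⟨m, Nat.sub_eq_of_eq_add (by ring)⟩))
    -- exclude j = 1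
    interval_cases j
    · -- j = 0
      interval_cases i
      · -- i = 0 : D = 1
        simp only [pow_zero, one_mul, mul_one] at hDa hDE
        rw [hDE] at hEb
        have hEb' : (q + 1) * b = p * q + p ^ 2 * q ^ 2 := hEb
        refine Or.inr (Or.inr ⟨q ^ 2, by positivity, hqsq, dvd_rfl, Or.inr ⟨?_, ?_⟩⟩)
        · rw [eq_div_iff (by positivity)]
          have : ((q:ℚ) + 1) * a = (p:ℚ) * q + 1 := by exact_mod_cast hDa
          push_cast
          linear_combination ((q:ℚ)^2) * this
        · rw [eq_div_iff hqQ]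
          have : ((q:ℚ) + 1) * b = (p:ℚ) * q + (p:ℚ)^2 * q^2 := by exact_mod_cast hEb'
          push_cast
          linear_combination this
      · -- i = 1 : D = p
        simp only [pow_zero, pow_one, one_mul, mul_one] at hDa hDE
        have haP : a = p := by
          have h4 : (q + 1) * a = (q + 1) * p := by rw [hDa]; ring
          exact Nat.eq_of_mul_eq_mul_left (by omega) h4
        have hE : E = p * q ^ 2 := by
          have h4 : p * E = p * (p * q ^ 2) := by rw [hDE]; ring
          exact Nat.eq_of_mul_eq_mul_left hp.pos h4
        have hbP : b = p * q := by
          rw [hE] at hEb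
          have h4 : (q + 1) * b = (q + 1) * (p * q) := by rw [hEb]; ring
          exact Nat.eq_of_mul_eq_mul_left (by omega) h4
        exact Or.inl ⟨haP, hbP⟩
      · -- i = 2 : D = p²
        simp only [pow_zero, pow_one, one_mul, mul_one] at hDa hDE
        have hE : E = q ^ 2 := by
          have h4 : p ^ 2 * E = p ^ 2 * q ^ 2 := by rw [hDE]
          exact Nat.eq_of_mul_eq_mul_left (by positivity) h4
        rw [hE] at hEb
        refine Or.inr (Or.inr ⟨1, one_pos, Nat.ModEq.refl 1, one_dvd _, Or.inl ⟨?_, ?_⟩⟩)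
        · rw [eq_div_iff hqQ]
          have : ((q:ℚ) + 1) * a = (p:ℚ) * q + (p:ℚ)^2 := by exact_mod_cast hDa
          push_cast
          linear_combination this
        · rw [eq_div_iff (by positivity)]
          have : ((q:ℚ) + 1) * b = (p:ℚ) * q + (q:ℚ)^2 := by exact_mod_cast hEb
          push_cast
          linear_combination this
    · -- j = 1 : contradiction
      exfalso
      have h4 : ((q:ℤ)+1) ∣ ((p:ℤ)^i * (q:ℤ)^1 - 1) - (q:ℤ) * ((p:ℤ)^i - 1) :=
        dvd_sub hmodD (Dvd.dvd.mul_left hpim1 _)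
      have h5 : ((p:ℤ)^i * (q:ℤ)^1 - 1) - (q:ℤ) * ((p:ℤ)^i - 1) = (q:ℤ) - 1 := by ring
      rw [h5] at h4
      have h6 : ((q:ℤ)+1) ∣ 2 := by
        have h7 : (2:ℤ) = ((q:ℤ)+1) - ((q:ℤ) - 1) := by ring
        rw [h7]
        exact dvd_sub dvd_rfl h4
      have := Int.le_of_dvd (by norm_num) h6
      omega
    · -- j = 2
      interval_cases i
      · -- i = 0 : D = q²
        simp only [pow_zero, pow_one, one_mul, mul_one] at hDa hDE
        have hE : E = p ^ 2 := by
          have h4 : q ^ 2 * E = q ^ 2 * p ^ 2 := by rw [hDE]; ring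
          exact Nat.eq_of_mul_eq_mul_left (by positivity) h4
        rw [hE] at hEb
        refine Or.inr (Or.inr ⟨1, one_pos, Nat.ModEq.refl 1, one_dvd _, Or.inr ⟨?_, ?_⟩⟩)
        · rw [eq_div_iff (by positivity)]
          have : ((q:ℚ) + 1) * a = (p:ℚ) * q + (q:ℚ)^2 := by exact_mod_cast hDa
          push_cast
          linear_combination this
        · rw [eq_div_iff hqQ]
          have : ((q:ℚ) + 1) * b = (p:ℚ) * q + (p:ℚ)^2 := by exact_mod_cast hEb
          push_cast
          linear_combination this
      · -- i = 1 : D = p q²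
        simp only [pow_zero, pow_one, one_mul, mul_one] at hDa hDE
        have haP : a = p * q := by
          have h4 : (q + 1) * a = (q + 1) * (p * q) := by rw [hDa]; ring
          exact Nat.eq_of_mul_eq_mul_left (by omega) h4
        have hE : E = p := by
          have h4 : p * q ^ 2 * E = p * q ^ 2 * p := by rw [hDE]; ring
          exact Nat.eq_of_mul_eq_mul_left (by positivity) h4
        have hbP : b = p := by
          rw [hE] at hEb
          have h4 : (q + 1) * b = (q + 1) * p := by rw [hEb]; ring
          exact Nat.eq_of_mul_eq_mul_left (by omega) h4
        exact Or.inr (Or.inl ⟨haP, hbP⟩)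
      · -- i = 2 : D = p² q²
        have hE : E = 1 := by
          have h4 : p ^ 2 * q ^ 2 * E = p ^ 2 * q ^ 2 * 1 := by rw [hDE]; ring
          exact Nat.eq_of_mul_eq_mul_left (by positivity) h4
        rw [hE] at hEb
        refine Or.inr (Or.inr ⟨q ^ 2, by positivity, hqsq, dvd_rfl, Or.inl ⟨?_, ?_⟩⟩)
        · rw [eq_div_iff hqQ]
          have : ((q:ℚ) + 1) * a = (p:ℚ) * q + (p:ℚ)^2 * (q:ℚ)^2 := by exact_mod_cast hDa
          push_cast
          linear_combination this
        · rw [eq_div_iff (by positivity)]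
          have : ((q:ℚ) + 1) * b = (p:ℚ) * q + 1 := by exact_mod_cast hEb
          push_cast
          linear_combination ((q:ℚ)^2) * this
  · rintro (⟨rfl, rfl⟩ | ⟨rfl, rfl⟩ | ⟨ζ, hz, hzmod, hzdvd, (⟨hA, hB⟩ | ⟨hA, hB⟩)⟩)
    · push_cast
      rw [div_add_div _ _ (by positivity) (by positivity),
        div_eq_div_iff (by positivity) (by positivity)]
      ring
    · push_cast
      rw [div_add_div _ _ (by positivity) (by positivity),
        div_eq_div_iff (by positivity) (by positivity)]
      ring
    · have hz0 : (0:ℚ) < ζ := by exact_mod_cast hz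
      have h1 : ((ζ:ℚ) * p ^ 2 + p * q) ≠ 0 := by positivity
      have h2 : ((ζ:ℚ) * p * q + q ^ 2) ≠ 0 := by positivity
      rw [hA, hB, one_div_div, one_div_div, div_add_div _ _ h1 h2,
        div_eq_div_iff (by positivity) (by positivity)]
      ring
    · have hz0 : (0:ℚ) < ζ := by exact_mod_cast hz
      have h1 : ((ζ:ℚ) * p ^ 2 + p * q) ≠ 0 := by positivity
      have h2 : ((ζ:ℚ) * p * q + q ^ 2) ≠ 0 := by positivity
      rw [hA, hB, one_div_div, one_div_div, div_add_div _ _ h2 h1,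
        div_eq_div_iff (by positivity) (by positivity)]
      ring
end

section
/- Let p and q be distinct primes such that (q+1) divides (p−1), and let a, b be positive integers satisfying 1/a + 1/b = (q+1)/(pq). If (a, b) is not equal to (p, pq) or (pq, p), then there exists a positive integer ζ with ζ ≡ 1 (mod q+1) and ζ dividing q², such that either a = (ζp² + pq)/(q+1) and b = (ζpq + q²)/(ζ(q+1)), or a = (ζpq + q²)/(ζ(q+1)) and b = (ζp² + pq)/(q+1). -/
theorem stmt_1 (p q : ℕ) (hp : p.Prime) (hq : q.Prime) (hpq : p ≠ q)
    (hdvd : (q + 1) ∣ (p - 1)) (a b : ℕ) (ha : 0 < a) (hb : 0 < b)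
    (heq : 1 / (a : ℚ) + 1 / (b : ℚ) = ((q : ℚ) + 1) / ((p : ℚ) * q))
    (hne1 : ¬(a = p ∧ b = p * q)) (hne2 : ¬(a = p * q ∧ b = p)) :
    ∃ ζ : ℕ, 0 < ζ ∧ ζ ≡ 1 [MOD q + 1] ∧ ζ ∣ q ^ 2 ∧
      (((a : ℚ) = ((ζ : ℚ) * p ^ 2 + p * q) / ((q : ℚ) + 1) ∧
          (b : ℚ) = ((ζ : ℚ) * p * q + q ^ 2) / ((ζ : ℚ) * ((q : ℚ) + 1))) ∨
        ((a : ℚ) = ((ζ : ℚ) * p * q + q ^ 2) / ((ζ : ℚ) * ((q : ℚ) + 1)) ∧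
          (b : ℚ) = ((ζ : ℚ) * p ^ 2 + p * q) / ((q : ℚ) + 1))) := by
  have hp2 : 2 ≤ p := hp.two_le
  have hq2 : 2 ≤ q := hq.two_le
  have hpQ : (0:ℚ) < p := by exact_mod_cast hp.pos
  have hqQ : (0:ℚ) < q := by exact_mod_cast hq.pos
  have haQ : (0:ℚ) < a := by exact_mod_cast ha
  have hbQ : (0:ℚ) < b := by exact_mod_cast hb
  have hq1Q : (0:ℚ) < (q:ℚ) + 1 := by linarith
  -- key equation in ℚ then ℤ
  have keyQ : ((q:ℚ)+1) * (a*b) = (p*q) * (a+b) := by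
    field_simp at heq
    linarith [heq]
  have key : ((q:ℤ)+1) * (a*b) = (p*q) * (a+b) := by exact_mod_cast keyQ
  -- positivity of A = (q+1)a - pq and B = (q+1)b - pq
  have hAQ : (p:ℚ)*q < ((q:ℚ)+1)*a := by
    have h1 : (0:ℚ) < 1/(b:ℚ) := by positivity
    have h2 : 1/(a:ℚ) < ((q:ℚ)+1)/((p:ℚ)*q) := by linarith
    rw [div_lt_div_iff₀ haQ (by positivity)] at h2
    linarith
  have hBQ : (p:ℚ)*q < ((q:ℚ)+1)*b := by
    have h1 : (0:ℚ) < 1/(a:ℚ) := by positivity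
    have h2 : 1/(b:ℚ) < ((q:ℚ)+1)/((p:ℚ)*q) := by linarith
    rw [div_lt_div_iff₀ hbQ (by positivity)] at h2
    linarith
  have hAZ : (p:ℤ)*q < ((q:ℤ)+1)*a := by exact_mod_cast hAQ
  have hBZ : (p:ℤ)*q < ((q:ℤ)+1)*b := by exact_mod_cast hBQ
  set A : ℤ := ((q:ℤ)+1)*a - p*q with hAdef
  set B : ℤ := ((q:ℤ)+1)*b - p*q with hBdef
  have hApos : 0 < A := by simp [hAdef]; linarith
  have hBpos : 0 < B := by simp [hBdef]; linarith
  have hAB : A * B = ((p:ℤ)*q)^2 := by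
    simp only [hAdef, hBdef]
    linear_combination ((q:ℤ)+1) * key
  set n : ℕ := A.toNat with hndef
  set m : ℕ := B.toNat with hmdef
  have hnA : (n:ℤ) = A := Int.toNat_of_nonneg hApos.le
  have hmB : (m:ℤ) = B := Int.toNat_of_nonneg hBpos.le
  have hnm : (n:ℤ) * m = ((p:ℤ)*q)^2 := by rw [hnA, hmB]; exact hAB
  have keyA : ((q:ℤ)+1)*a = (n:ℤ) + p*q := by rw [hnA]; simp [hAdef]
  have keyB : ((q:ℤ)+1)*b = (m:ℤ) + p*q := by rw [hmB]; simp [hBdef]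
  -- n divides p^2 * q^2
  have hn_dvd : n ∣ p^2 * q^2 := by
    have : (n:ℤ) ∣ ((p^2 * q^2 : ℕ) : ℤ) := by
      push_cast
      exact ⟨m, by linear_combination -hnm⟩
    exact_mod_cast this
  obtain ⟨d1, d2, hd1, hd2, hn_eq⟩ := exists_dvd_and_dvd_of_dvd_mul hn_dvd
  obtain ⟨i, hi, rfl⟩ := (Nat.dvd_prime_pow hp).mp hd1
  obtain ⟨j, hj, rfl⟩ := (Nat.dvd_prime_pow hq).mp hd2
  -- p ≡ 1 mod (q+1) in ℤ
  have hp1Z : ((q:ℤ)+1) ∣ (p:ℤ) - 1 := by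
    have := Int.natCast_dvd_natCast.mpr hdvd
    push_cast [Nat.cast_sub hp.one_le] at this
    convert this using 1 <;> push_cast <;> ring_nf
  obtain ⟨c, hc⟩ := hp1Z
  have hq1ne : ((q:ℚ)+1) ≠ 0 := ne_of_gt hq1Q
  have hqne : (q:ℚ) ≠ 0 := ne_of_gt hqQ
  -- congruence fact for ζ = q^2
  have hcong : q^2 ≡ 1 [MOD q + 1] := by
    rw [Nat.modEq_iff_dvd]
    exact ⟨-((q:ℤ)-1), by push_cast; ring⟩
  -- helper: q+1 does not divide 2
  have hq1not2 : ¬ (((q:ℤ)+1) ∣ 2) := by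
    intro h
    have := Int.le_of_dvd (by norm_num) h
    have : (2:ℤ) ≤ q := by exact_mod_cast hq2
    omega
  have hq2ne : ((q:ℚ))^2 ≠ 0 := pow_ne_zero 2 hqne
  interval_cases i <;> interval_cases j <;>
    simp -failIfUnchanged only [pow_zero, pow_one, one_mul, mul_one] at hn_eq keyA hnm
  -- case n = 1 : ζ = q^2, second branch
  · have hnZ : (n:ℤ) = 1 := by exact_mod_cast congrArg (Nat.cast : ℕ → ℤ) hn_eq
    have hm : (m:ℤ) = (p:ℤ)^2*q^2 := by linear_combination hnm - (m:ℤ)*hnZ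
    have hA : ((q:ℚ)+1)*a = 1 + p*q := by
      have h := keyA; rw [hnZ] at h; exact_mod_cast h
    have hB : ((q:ℚ)+1)*b = (p:ℚ)^2*q^2 + p*q := by
      have h := keyB; rw [hm] at h; exact_mod_cast h
    refine ⟨q^2, by positivity, hcong, dvd_refl _, Or.inr ⟨?_, ?_⟩⟩
    · rw [eq_div_iff (by push_cast; exact mul_ne_zero hq2ne hq1ne)]
      push_cast
      linear_combination (q:ℚ)^2 * hA
    · rw [eq_div_iff hq1ne]
      push_cast
      linear_combination hB
  -- case n = q : contradiction
  · exfalso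
    apply hq1not2
    refine ⟨(p:ℤ)+1 - a - c, ?_⟩
    have hnZ : (n:ℤ) = q := by exact_mod_cast congrArg (Nat.cast : ℕ → ℤ) hn_eq
    linear_combination keyA + hnZ - hc
  -- case n = q^2 : ζ = 1, second branch
  · have hnZ : (n:ℤ) = (q:ℤ)^2 := by exact_mod_cast congrArg (Nat.cast : ℕ → ℤ) hn_eq
    have hm : (m:ℤ) = (p:ℤ)^2 :=
      mul_left_cancel₀ (show ((q:ℤ)^2) ≠ 0 by positivity)
        (by linear_combination hnm - (m:ℤ)*hnZ)
    have hA : ((q:ℚ)+1)*a = (q:ℚ)^2 + p*q := by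
      have h := keyA; rw [hnZ] at h; exact_mod_cast h
    have hB : ((q:ℚ)+1)*b = (p:ℚ)^2 + p*q := by
      have h := keyB; rw [hm] at h; exact_mod_cast h
    refine ⟨1, one_pos, Nat.ModEq.refl 1, one_dvd _, Or.inr ⟨?_, ?_⟩⟩
    · rw [eq_div_iff (by push_cast; exact mul_ne_zero one_ne_zero hq1ne)]
      push_cast
      linear_combination hA
    · rw [eq_div_iff hq1ne]
      push_cast
      linear_combination hB
  -- case n = p : a = p, b = pq, excluded
  · exfalso
    have hnZ : (n:ℤ) = p := by exact_mod_cast congrArg (Nat.cast : ℕ → ℤ) hn_eq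
    have hm : (m:ℤ) = (p:ℤ)*q^2 :=
      mul_left_cancel₀ (show ((p:ℤ)) ≠ 0 by positivity)
        (by linear_combination hnm - (m:ℤ)*hnZ)
    have haP : (a:ℤ) = p := by
      apply mul_left_cancel₀ (show ((q:ℤ)+1) ≠ 0 by positivity)
      rw [keyA, hnZ]; ring
    have hbP : (b:ℤ) = p*q := by
      apply mul_left_cancel₀ (show ((q:ℤ)+1) ≠ 0 by positivity)
      rw [keyB, hm]; ring
    exact hne1 ⟨by exact_mod_cast haP, by exact_mod_cast hbP⟩
  -- case n = p*q : contradiction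
  · exfalso
    apply hq1not2
    refine ⟨2*q*c + 2 - a, ?_⟩
    have hnZ : (n:ℤ) = p*q := by exact_mod_cast congrArg (Nat.cast : ℕ → ℤ) hn_eq
    linear_combination keyA + hnZ + 2*(q:ℤ)*hc
  -- case n = p*q^2 : a = pq, b = p, excluded
  · exfalso
    have hnZ : (n:ℤ) = (p:ℤ)*q^2 := by exact_mod_cast congrArg (Nat.cast : ℕ → ℤ) hn_eq
    have hm : (m:ℤ) = (p:ℤ) :=
      mul_left_cancel₀ (show ((p:ℤ)*q^2) ≠ 0 by positivity)
        (by linear_combination hnm - (m:ℤ)*hnZ)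
    have haP : (a:ℤ) = p*q := by
      apply mul_left_cancel₀ (show ((q:ℤ)+1) ≠ 0 by positivity)
      rw [keyA, hnZ]; ring
    have hbP : (b:ℤ) = p := by
      apply mul_left_cancel₀ (show ((q:ℤ)+1) ≠ 0 by positivity)
      rw [keyB, hm]; ring
    exact hne2 ⟨by exact_mod_cast haP, by exact_mod_cast hbP⟩
  -- case n = p^2 : ζ = 1, first branch
  · have hnZ : (n:ℤ) = (p:ℤ)^2 := by exact_mod_cast congrArg (Nat.cast : ℕ → ℤ) hn_eq
    have hm : (m:ℤ) = (q:ℤ)^2 :=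
      mul_left_cancel₀ (show ((p:ℤ)^2) ≠ 0 by positivity)
        (by linear_combination hnm - (m:ℤ)*hnZ)
    have hA : ((q:ℚ)+1)*a = (p:ℚ)^2 + p*q := by
      have h := keyA; rw [hnZ] at h; exact_mod_cast h
    have hB : ((q:ℚ)+1)*b = (q:ℚ)^2 + p*q := by
      have h := keyB; rw [hm] at h; exact_mod_cast h
    refine ⟨1, one_pos, Nat.ModEq.refl 1, one_dvd _, Or.inl ⟨?_, ?_⟩⟩
    · rw [eq_div_iff hq1ne]
      push_cast
      linear_combination hA
    · rw [eq_div_iff (by push_cast; exact mul_ne_zero one_ne_zero hq1ne)]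
      push_cast
      linear_combination hB
  -- case n = p^2*q : contradiction
  · exfalso
    apply hq1not2
    refine ⟨(p:ℤ)*q*c + 2*q*c + 2 - a, ?_⟩
    have hnZ : (n:ℤ) = (p:ℤ)^2*q := by exact_mod_cast congrArg (Nat.cast : ℕ → ℤ) hn_eq
    linear_combination keyA + hnZ + ((p:ℤ)*q + 2*(q:ℤ))*hc
  -- case n = p^2*q^2 : ζ = q^2, first branch
  · have hnZ : (n:ℤ) = (p:ℤ)^2*q^2 := by exact_mod_cast congrArg (Nat.cast : ℕ → ℤ) hn_eq
    have hm : (m:ℤ) = 1 :=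
      mul_left_cancel₀ (show ((p:ℤ)^2*q^2) ≠ 0 by positivity)
        (by linear_combination hnm - (m:ℤ)*hnZ)
    have hA : ((q:ℚ)+1)*a = (p:ℚ)^2*q^2 + p*q := by
      have h := keyA; rw [hnZ] at h; exact_mod_cast h
    have hB : ((q:ℚ)+1)*b = 1 + p*q := by
      have h := keyB; rw [hm] at h; exact_mod_cast h
    refine ⟨q^2, by positivity, hcong, dvd_refl _, Or.inl ⟨?_, ?_⟩⟩
    · rw [eq_div_iff hq1ne]
      push_cast
      linear_combination hA
    · rw [eq_div_iff (by push_cast; exact mul_ne_zero hq2ne hq1ne)]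
      push_cast
      linear_combination (q:ℚ)^2 * hB
end

section
/- Let p and q be distinct primes such that (q+1) divides (p−1), and let ζ be a positive integer with ζ ≡ 1 (mod q+1) and ζ dividing q². Then ζp² + pq is divisible by q+1, ζpq + q² is divisible by ζ(q+1), and the positive integers a = (ζp² + pq)/(q+1) and b = (ζpq + q²)/(ζ(q+1)) satisfy 1/a + 1/b = (q+1)/(pq). -/
/-! With `s = ζ p + q`, the two numerators factor as `ζ p² + p q = p s` and `ζ p q + q² = q s`.
Modulo `q + 1` both `ζ` and `p` are `1`, so `s ≡ q + 1 ≡ 0`; and `ζ ≡ 1` also makes `ζ` coprime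
to `q + 1`, while `ζ ∣ q²` gives `ζ ∣ q s`. Finally
`(q + 1)/(p s) + ζ (q + 1)/(q s) = (q + 1)(q + ζ p)/(p q s) = (q + 1)/(p q)`. -/

theorem Nat.dvd_mul_add_of_modEq_one {ζ p q : ℕ} (hζ : ζ ≡ 1 [MOD q + 1])
    (hp : p ≡ 1 [MOD q + 1]) : q + 1 ∣ ζ * p + q := by
  have h : ζ * p + q ≡ q + 1 [MOD q + 1] := by
    simpa [add_comm] using (hζ.mul hp).add_right q
  exact Nat.modEq_zero_iff_dvd.mp (h.trans (Nat.modEq_zero_iff_dvd.mpr dvd_rfl))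

theorem one_div_div_add_one_div_div {K : Type*} [Field K] {p q ζ n : K} (hp : p ≠ 0)
    (hq : q ≠ 0) (hs : ζ * p + q ≠ 0) :
    1 / (p * (ζ * p + q) / n) + 1 / (q * (ζ * p + q) / (ζ * n)) = n / (p * q) := by
  rw [one_div_div, one_div_div, div_add_div _ _ (mul_ne_zero hp hs) (mul_ne_zero hq hs)]
  rw [div_eq_div_iff (by positivity) (mul_ne_zero hp hq)]
  ring

theorem stmt_2_general (p q : ℕ) (hp : p.Prime) (hq : q.Prime)
    (hdvd : (q + 1) ∣ (p - 1)) (ζ : ℕ) (hζ : 0 < ζ)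
    (hζmod : ζ ≡ 1 [MOD q + 1]) (hζdvd : ζ ∣ q ^ 2) :
    (q + 1) ∣ (ζ * p ^ 2 + p * q) ∧
    (ζ * (q + 1)) ∣ (ζ * p * q + q ^ 2) ∧
    0 < (ζ * p ^ 2 + p * q) / (q + 1) ∧
    0 < (ζ * p * q + q ^ 2) / (ζ * (q + 1)) ∧
    1 / (((ζ * p ^ 2 + p * q) / (q + 1) : ℕ) : ℚ) +
        1 / (((ζ * p * q + q ^ 2) / (ζ * (q + 1)) : ℕ) : ℚ) =
      ((q : ℚ) + 1) / ((p : ℚ) * q) := by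
  have hp0 := hp.pos
  have hq0 := hq.pos
  have hpA : ζ * p ^ 2 + p * q = p * (ζ * p + q) := by ring
  have hqB : ζ * p * q + q ^ 2 = q * (ζ * p + q) := by ring
  have hs : q + 1 ∣ ζ * p + q :=
    Nat.dvd_mul_add_of_modEq_one hζmod ((Nat.modEq_iff_dvd' hp0).mpr hdvd).symm
  have hA : q + 1 ∣ ζ * p ^ 2 + p * q := hpA ▸ hs.mul_left p
  have hB : ζ * (q + 1) ∣ ζ * p * q + q ^ 2 :=
    (Nat.coprime_of_mul_modEq_one 1 (by rwa [mul_one])).mul_dvd_of_dvd_of_dvd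
      (dvd_add (dvd_mul_of_dvd_left (dvd_mul_right ζ p) q) hζdvd) (hqB ▸ hs.mul_left q)
  refine ⟨hA, hB, Nat.div_pos (Nat.le_of_dvd (by positivity) hA) (by omega),
    Nat.div_pos (Nat.le_of_dvd (by positivity) hB) (by positivity), ?_⟩
  rw [Nat.cast_div hA (by positivity), Nat.cast_div hB (by positivity), hpA, hqB]
  push_cast
  exact one_div_div_add_one_div_div (by positivity) (by positivity) (by positivity)

theorem stmt_2 (p q : ℕ) (hp : p.Prime) (hq : q.Prime) (hpq : p ≠ q)
    (hdvd : (q + 1) ∣ (p - 1)) (ζ : ℕ) (hζ : 0 < ζ)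
    (hζmod : ζ ≡ 1 [MOD q + 1]) (hζdvd : ζ ∣ q ^ 2) :
    (q + 1) ∣ (ζ * p ^ 2 + p * q) ∧
    (ζ * (q + 1)) ∣ (ζ * p * q + q ^ 2) ∧
    0 < (ζ * p ^ 2 + p * q) / (q + 1) ∧
    0 < (ζ * p * q + q ^ 2) / (ζ * (q + 1)) ∧
    1 / (((ζ * p ^ 2 + p * q) / (q + 1) : ℕ) : ℚ) +
        1 / (((ζ * p * q + q ^ 2) / (ζ * (q + 1)) : ℕ) : ℚ) =
      ((q : ℚ) + 1) / ((p : ℚ) * q) :=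
  stmt_2_general p q hp hq hdvd ζ hζ hζmod hζdvd
end

section
/- Let p and q be distinct primes such that (q+1) divides (p−1), and let a, b be positive integers satisfying 1/a + 1/b = (q+1)/(pq). If p divides both a and b, then (a, b) = (p, pq) or (a, b) = (pq, p). -/
theorem stmt_4 (p q : ℕ) (hp : p.Prime) (hq : q.Prime) (hpq : p ≠ q)
    (hdvd : (q + 1) ∣ (p - 1)) (a b : ℕ) (ha : 0 < a) (hb : 0 < b)
    (heq : 1 / (a : ℚ) + 1 / (b : ℚ) = ((q : ℚ) + 1) / ((p : ℚ) * q))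
    (hpa : p ∣ a) (hpb : p ∣ b) :
    (a = p ∧ b = p * q) ∨ (a = p * q ∧ b = p) := by
  obtain ⟨m, rfl⟩ := hpa
  obtain ⟨n, rfl⟩ := hpb
  have hp0 : 0 < p := hp.pos
  have hq0 : 0 < q := hq.pos
  have hm : 0 < m := by
    rcases Nat.eq_zero_or_pos m with h | h
    · simp [h] at ha
    · exact h
  have hn : 0 < n := by
    rcases Nat.eq_zero_or_pos n with h | h
    · simp [h] at hb
    · exact h
  -- reduce the rational equation to a natural number equation
  have hQp : (p : ℚ) ≠ 0 := by exact_mod_cast hp0.ne'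
  have hQq : (q : ℚ) ≠ 0 := by exact_mod_cast hq0.ne'
  have hQm : (m : ℚ) ≠ 0 := by exact_mod_cast hm.ne'
  have hQn : (n : ℚ) ≠ 0 := by exact_mod_cast hn.ne'
  have key : q * (m + n) = (q + 1) * (m * n) := by
    have : (q : ℚ) * (m + n) = ((q : ℚ) + 1) * (m * n) := by
      push_cast at heq
      field_simp at heq
      have hp2 : (p : ℚ) ^ 2 ≠ 0 := pow_ne_zero 2 hQp
      apply mul_left_cancel₀ hp2
      linear_combination (p : ℚ) ^ 2 * heq
    exact_mod_cast this
  have hdq : q ∣ m * n := by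
    have h1 : q ∣ (q + 1) * (m * n) := ⟨m + n, key.symm⟩
    have h2 : (q + 1) * (m * n) = q * (m * n) + m * n := by ring
    rw [h2] at h1
    exact (Nat.dvd_add_right ⟨m * n, rfl⟩).mp h1
  rcases (hq.dvd_mul.mp hdq) with hqm | hqn
  · -- q ∣ m : expect m = q, n = 1, i.e. right branch
    obtain ⟨t, rfl⟩ := hqm
    have ht0 : 0 < t := by
      rcases Nat.eq_zero_or_pos t with h | h
      · simp [h] at hm
      · exact h
    have key2 : q * t + n = (q + 1) * (t * n) := by
      have : q * (q * t + n) = q * ((q + 1) * (t * n)) := by ring_nf; ring_nf at key; linarith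
      exact Nat.eq_of_mul_eq_mul_left hq0 this
    have ht1 : t = 1 := by
      by_contra h
      have h2 : 2 ≤ t := by omega
      nlinarith [key2, hq0, hn, h2]
    subst ht1
    have hn1 : n = 1 := by nlinarith [key2, hq0, hn]
    subst hn1
    right
    constructor <;> ring
  · -- q ∣ n : expect m = 1, n = q, i.e. left branch
    obtain ⟨t, rfl⟩ := hqn
    have ht0 : 0 < t := by
      rcases Nat.eq_zero_or_pos t with h | h
      · simp [h] at hn
      · exact h
    have key2 : q * t + m = (q + 1) * (t * m) := by
      have : q * (q * t + m) = q * ((q + 1) * (t * m)) := by ring_nf; ring_nf at key; linarith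
      exact Nat.eq_of_mul_eq_mul_left hq0 this
    have ht1 : t = 1 := by
      by_contra h
      have h2 : 2 ≤ t := by omega
      nlinarith [key2, hq0, hm, h2]
    subst ht1
    have hm1 : m = 1 := by nlinarith [key2, hq0, hm]
    subst hm1
    left
    constructor <;> ring
end
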